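/- Define δ̂ : ℝ → ℝ by δ̂(λ) = 1/λ + 1/(1 − e^λ) for λ ≠ 0 and δ̂(0) = 1/2. Then δ̂ is strictly decreasing on ℝ. -/

import Mathlib

/-!
On `(0, ∞)` the weight has derivative `-1/λ² + e^λ/(1 - e^λ)²`, which is negative because
`λ e^{λ/2} < e^λ - 1`, i.e. `λ/2 < sinh (λ/2)`. The values there stay below `1/2` by the Padé
bound `(2 - λ) e^λ < 2 + λ`. Finally `δ(-λ) = 1 - δ(λ)`, so the weight is a point reflection of
itself through `(0, 1/2)`, which carries strict antitonicity from `[0, ∞)` to `(-∞, 0]`.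
-/

open Real Set

theorem StrictAntiOn.Ici_of_Ioi {α β : Type*} [LinearOrder α] [Preorder β] {f : α → β} {a : α}
    (h : StrictAntiOn f (Ioi a)) (hlt : ∀ x, a < x → f x < f a) : StrictAntiOn f (Ici a) := by
  intro x hx y hy hxy
  rcases (mem_Ici.1 hx).eq_or_lt with rfl | hax
  · exact hlt y hxy
  · exact h hax (hax.trans hxy) hxy

theorem strictAnti_of_map_neg_eq_sub {α β : Type*} [AddCommGroup α] [LinearOrder α]
    [IsOrderedAddMonoid α] [AddCommGroup β] [PartialOrder β] [IsOrderedAddMonoid β]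
    {f : α → β} {c : β} (hf : ∀ x, f (-x) = c - f x) (h : StrictAntiOn f (Ici 0)) : StrictAnti f := by
  refine StrictAntiOn.Iic_union_Ici (a := 0) (fun x hx y hy hxy ↦ ?_) h
  have hneg : f (-x) < f (-y) :=
    h (neg_nonneg.2 hy) (neg_nonneg.2 (hxy.le.trans hy)) (neg_lt_neg hxy)
  rwa [hf x, hf y, sub_lt_sub_iff_left] at hneg

noncomputable def changCooperWeight (x : ℝ) : ℝ := 1 / x + 1 / (1 - exp x)

theorem one_sub_exp_ne_zero {x : ℝ} (hx : x ≠ 0) : 1 - exp x ≠ 0 :=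
  sub_ne_zero.2 fun h ↦ hx (exp_eq_one_iff x |>.1 h.symm)

theorem changCooperWeight_neg {x : ℝ} (hx : x ≠ 0) :
    changCooperWeight (-x) = 1 - changCooperWeight x := by
  have h₁ : exp x - 1 ≠ 0 := fun h ↦ one_sub_exp_ne_zero hx (by linarith)
  have h₂ : 1 - exp x ≠ 0 := one_sub_exp_ne_zero hx
  simp only [changCooperWeight, exp_neg]
  field_simp
  ring

theorem hasDerivAt_changCooperWeight {x : ℝ} (hx : x ≠ 0) :
    HasDerivAt changCooperWeight (-(1 / x ^ 2) + exp x / (1 - exp x) ^ 2) x := by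
  have hinv : HasDerivAt (fun y : ℝ ↦ 1 / y) (-(1 / x ^ 2)) x := by
    simpa only [one_div] using hasDerivAt_inv hx
  have hden : HasDerivAt (fun y ↦ 1 - exp y) (-exp x) x := by
    simpa using (hasDerivAt_exp x).const_sub 1
  exact (hinv.add ((hasDerivAt_const x (1 : ℝ)).fun_div hden
    (one_sub_exp_ne_zero hx))).congr_deriv (by ring)

theorem sq_mul_exp_lt_exp_sub_one_sq {x : ℝ} (hx : 0 < x) :
    x ^ 2 * exp x < (exp x - 1) ^ 2 := by
  set t := x / 2
  have ht : t < sinh t := self_lt_sinh_iff.2 (by positivity)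
  have hxt : x = 2 * t := by ring
  have hexp : exp x = exp t ^ 2 := by rw [hxt, ← exp_nat_mul]; norm_num
  have hsinh : exp x - 1 = 2 * sinh t * exp t := by
    rw [hexp, sinh_eq, exp_neg]
    field_simp
  rw [hsinh, hexp, hxt]
  have : 0 < t := by positivity
  calc (2 * t) ^ 2 * exp t ^ 2 < (2 * sinh t) ^ 2 * exp t ^ 2 := by gcongr
    _ = (2 * sinh t * exp t) ^ 2 := by ring

theorem changCooperWeight_strictAntiOn_Ioi : StrictAntiOn changCooperWeight (Ioi 0) := by
  refine strictAntiOn_of_hasDerivWithinAt_neg (convex_Ioi 0)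
    (fun x hx ↦ (hasDerivAt_changCooperWeight (ne_of_gt hx)).continuousAt.continuousWithinAt)
    (fun x hx ↦ (hasDerivAt_changCooperWeight (ne_of_gt (interior_subset hx))).hasDerivWithinAt)
    (fun x hx ↦ ?_)
  rw [interior_Ioi, mem_Ioi] at hx
  have hx0 : (0 : ℝ) < x ^ 2 := by positivity
  have hden : (0 : ℝ) < (1 - exp x) ^ 2 :=
    sq_pos_of_ne_zero (one_sub_exp_ne_zero (ne_of_gt hx))
  have : exp x / (1 - exp x) ^ 2 < 1 / x ^ 2 := by
    rw [div_lt_div_iff₀ hden hx0]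
    nlinarith [sq_mul_exp_lt_exp_sub_one_sq hx]
  linarith

theorem two_sub_mul_exp_lt_two_add {x : ℝ} (hx : 0 < x) : (2 - x) * exp x < 2 + x := by
  let g : ℝ → ℝ := fun y ↦ 2 + y - (2 - y) * exp y
  have hg : ∀ y, HasDerivAt g (1 - (1 - y) * exp y) y := fun y ↦ by
    refine (((hasDerivAt_id' y).const_add 2).sub
      (((hasDerivAt_id' y).const_sub 2).mul (hasDerivAt_exp y))).congr_deriv ?_
    ring
  have hmono : StrictMonoOn g (Ici 0) := by
    refine strictMonoOn_of_hasDerivWithinAt_pos (convex_Ici 0)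
      (fun y _ ↦ (hg y).continuousAt.continuousWithinAt) (fun y _ ↦ (hg y).hasDerivWithinAt)
      (fun y hy ↦ ?_)
    rw [interior_Ici] at hy
    have hlt : 1 - y < exp (-y) := by linarith [add_one_lt_exp (neg_ne_zero.2 (ne_of_gt hy))]
    have : (1 - y) * exp y < 1 :=
      calc (1 - y) * exp y < exp (-y) * exp y := by gcongr
        _ = 1 := by rw [← exp_add, neg_add_cancel, exp_zero]
    linarith
  have := hmono self_mem_Ici hx.le hx
  simp only [g, sub_zero, exp_zero] at this
  linarith

theorem changCooperWeight_lt_half {x : ℝ} (hx : 0 < x) : changCooperWeight x < 1 / 2 := by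
  have hexp : 1 < exp x := one_lt_exp_iff.2 hx
  have h₁ : 1 - exp x ≠ 0 := by linarith
  have h₂ : exp x - 1 ≠ 0 := by linarith
  have hdiff : 1 / 2 - changCooperWeight x =
      (2 + x - (2 - x) * exp x) / (2 * x * (exp x - 1)) := by
    simp only [changCooperWeight]
    field_simp
    ring
  have : 0 < 1 / 2 - changCooperWeight x := by
    rw [hdiff]
    exact div_pos (by linarith [two_sub_mul_exp_lt_two_add hx]) (by nlinarith)
  linarith

/-- The extended Chang–Cooper weight `δ̂`, with `δ̂(λ) = 1/λ + 1/(1 − e^λ)` for `λ ≠ 0`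
and `δ̂(0) = 1/2`, is strictly decreasing on `ℝ`. -/
theorem chang_cooper_weight_strictAnti
    (d : ℝ → ℝ)
    (hd : ∀ l : ℝ, l ≠ 0 → d l = 1 / l + 1 / (1 - Real.exp l))
    (h0 : d 0 = 1 / 2) :
    StrictAnti d := by
  have hd' : ∀ x, x ≠ 0 → d x = changCooperWeight x := hd
  have hreflect : ∀ x, d (-x) = 1 - d x := by
    intro x
    rcases eq_or_ne x 0 with rfl | hx
    · rw [neg_zero, h0]
      norm_num
    · rw [hd' _ (neg_ne_zero.2 hx), hd' x hx, changCooperWeight_neg hx]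
  refine strictAnti_of_map_neg_eq_sub hreflect (StrictAntiOn.Ici_of_Ioi ?_ fun x hx ↦ ?_)
  · exact changCooperWeight_strictAntiOn_Ioi.congr fun x hx ↦ (hd' x (ne_of_gt hx)).symm
  · rw [h0, hd' x (ne_of_gt hx)]
    exact changCooperWeight_lt_half hx
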